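/- arXiv:2106.08063 — 14 statements merged into one kernel-verified Lean document; each statement's English description precedes it below -/
import Mathlib

section
/- Let X be a nonempty set, Y a nonempty subset of X, and let f be an element of the monoid T̄(X,Y). If f is unit-regular in T̄(X,Y), then the induced map f↾Y is unit-regular in the full transformation monoid T(Y). -/
/-- An element `s` of a monoid is unit-regular if `s * u * s = s` for some unit `u`. -/
def IsUnitRegular {M : Type*} [Monoid M] (s : M) : Prop :=
  ∃ u : Mˣ, s * (↑u : M) * s = s

/-- The monoid `T̄(X, Y)` of all self-maps of `X` leaving `Y` invariant. -/
def Tbar (X : Type*) (Y : Set X) : Submonoid (Function.End X) where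
  carrier := {f | ∀ x ∈ Y, f x ∈ Y}
  one_mem' := fun x hx => hx
  mul_mem' := fun {f g} hf hg x hx => hf _ (hg x hx)

/-- The restriction `f↾Y : Y → Y` of `f` to an invariant subset `Y`. -/
def restrictEnd {X : Type*} {Y : Set X} (f : Function.End X) (hf : ∀ x ∈ Y, f x ∈ Y) :
    Function.End ↥Y := fun y => ⟨f ↑y, hf ↑y y.2⟩

theorem stmt0 {X : Type*} [Nonempty X] (Y : Set X) (hY : Y.Nonempty)
    (f : Function.End X) (hf : ∀ x ∈ Y, f x ∈ Y)
    (h : IsUnitRegular (⟨f, hf⟩ : Tbar X Y)) :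
    IsUnitRegular (restrictEnd f hf) := by
  obtain ⟨u, hu⟩ := h
  -- u.val : Tbar X Y, with underlying function (u.val : Function.End X)
  refine ⟨⟨restrictEnd (u.val : Function.End X) u.val.2,
          restrictEnd ((u⁻¹).val : Function.End X) (u⁻¹).val.2, ?_, ?_⟩, ?_⟩
  · funext y
    have := congrArg Subtype.val u.mul_inv
    exact Subtype.ext (congrFun this (y : X))
  · funext y
    have := congrArg Subtype.val u.inv_mul
    exact Subtype.ext (congrFun this (y : X))
  · funext y
    have := congrArg Subtype.val hu
    exact Subtype.ext (congrFun this (y : X))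
end

section
/- Let X be a nonempty set, Y a nonempty subset of X, and f ∈ T̄(X,Y). Then f is unit-regular in T̄(X,Y) if and only if the following three conditions hold: (i) f↾Y is unit-regular in T(Y); (ii) the range of f↾Y equals Y ∩ f(X), i.e. f(Y) = Y ∩ f(X); (iii) there exist a transversal T_f of ker(f) and a transversal T' of ker(f↾Y) with T' = Y ∩ T_f such that the cardinality of (X \ T_f) \ (Y \ T') equals the cardinality of (X \ f(X)) \ (Y \ f(Y)). -/
/-- `T` is a transversal of the equivalence relation `ker f = {(x,y) : f x = f y}`:
it contains exactly one element of each `ker f`-class. -/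
def IsTransversal {X : Type*} (f : X → X) (T : Set X) : Prop :=
  ∀ x : X, ∃! t, t ∈ T ∧ f t = f x

/-- `T` is a transversal of the equivalence relation `ker (f↾Y)` on `Y`. -/
def IsTransversalOn {X : Type*} (f : X → X) (Y T : Set X) : Prop :=
  T ⊆ Y ∧ ∀ x ∈ Y, ∃! t, t ∈ T ∧ f t = f x

/-! A unit of `T̄(X, Y)` is a permutation `g` of `X` with `g(Y) = Y`. If `f g f = f`, then
`g(f(X))` is a transversal of `ker f`, and `g` maps `Yᶜ \ f(X)` onto `Yᶜ \ g(f(X))`. These are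
the two sets compared in (iii), because `Rᶜ \ (Y \ A) = Yᶜ \ R` whenever `A ⊆ R`.

Conversely, the unit is glued from a permutation of `Y` witnessing (i) and a permutation of `Yᶜ`
sending each `z ∈ f(X) \ Y` to its representative in `T_f`, extended to the rest of `Yᶜ` by the
cardinality condition. By (ii) and `T' = Y ∩ T_f`, representatives of points outside `Y` lie
outside `Y`. -/

open Set Cardinal Equiv

section Transversal

variable {X : Type*} {f g : X → X} {Y T : Set X}

theorem IsTransversal.bijOn (h : IsTransversal f T) : BijOn f T (range f) := by
  refine ⟨fun t _ => mem_range_self t, fun t ht t' ht' hft => ?_, ?_⟩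
  · exact (h t).unique ⟨ht, rfl⟩ ⟨ht', hft.symm⟩
  · rintro _ ⟨x, rfl⟩
    obtain ⟨t, ⟨ht, hft⟩, -⟩ := h x
    exact ⟨t, ht, hft⟩

theorem IsTransversalOn.image_eq (h : IsTransversalOn f Y T) : f '' T = f '' Y := by
  refine (image_mono h.1).antisymm ?_
  rintro _ ⟨y, hy, rfl⟩
  obtain ⟨t, ⟨ht, hft⟩, -⟩ := h.2 y hy
  exact ⟨t, ht, hft⟩

theorem apply_apply_eq_of_mem_image_range (hfg : ∀ x, f (g (f x)) = f x) {t : X}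
    (ht : t ∈ g '' range f) : g (f t) = t := by
  obtain ⟨_, ⟨a, rfl⟩, rfl⟩ := ht
  rw [hfg]

theorem isTransversal_image_range (hfg : ∀ x, f (g (f x)) = f x) :
    IsTransversal f (g '' range f) := fun x =>
  ⟨g (f x), ⟨mem_image_of_mem g (mem_range_self x), hfg x⟩, fun t ⟨ht, hft⟩ => by
    rw [← hft, apply_apply_eq_of_mem_image_range hfg ht]⟩

theorem isTransversalOn_inter_image_range (hfg : ∀ x, f (g (f x)) = f x)
    (hf : ∀ x ∈ Y, f x ∈ Y) (hg : ∀ x ∈ Y, g x ∈ Y) :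
    IsTransversalOn f Y (Y ∩ g '' range f) :=
  ⟨inter_subset_left, fun x hx =>
    ⟨g (f x), ⟨⟨hg _ (hf x hx), mem_image_of_mem g (mem_range_self x)⟩, hfg x⟩,
      fun t ⟨ht, hft⟩ => by rw [← hft, apply_apply_eq_of_mem_image_range hfg ht.2]⟩⟩

theorem image_eq_inter_range (hfg : ∀ x, f (g (f x)) = f x) (hf : ∀ x ∈ Y, f x ∈ Y)
    (hg : ∀ x ∈ Y, g x ∈ Y) :
    f '' Y = Y ∩ range f := by
  refine subset_inter (image_subset_iff.2 hf) (image_subset_range f Y) |>.antisymm ?_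
  rintro _ ⟨hy, x, rfl⟩
  exact ⟨g (f x), hg _ hy, hfg x⟩

end Transversal

theorem Set.compl_sdiff_sdiff_of_subset {α : Type*} {A R : Set α} (Y : Set α) (h : A ⊆ R) :
    Rᶜ \ (Y \ A) = Yᶜ \ R := by
  ext x
  constructor
  · rintro ⟨hR, hYA⟩
    exact ⟨fun hY => hYA ⟨hY, fun hA => hR (h hA)⟩, hR⟩
  · rintro ⟨hY, hR⟩
    exact ⟨hR, fun hYA => hY hYA.1⟩

theorem Equiv.Perm.exists_subtype_extend {α : Type*} {Z s t : Set α}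
    (e : ↥(Z ∩ s) ≃ ↥(Z ∩ t)) (h : #↥(Z \ s) = #↥(Z \ t)) :
    ∃ g : Perm Z, ∀ x (hx : x ∈ Z ∩ s), (g ⟨x, hx.1⟩ : α) = e ⟨x, hx⟩ := by
  let e' : ↥(Subtype.val ⁻¹' s : Set Z) ≃ ↥(Subtype.val ⁻¹' t : Set Z) :=
    (subtypeSubtypeEquivSubtypeInter (· ∈ Z) (· ∈ s)).trans
      (e.trans (subtypeSubtypeEquivSubtypeInter (· ∈ Z) (· ∈ t)).symm)
  have hrange : range (fun x => (e' x : Z)) = Subtype.val ⁻¹' t := by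
    simp only [range_comp' Subtype.val e', e'.range_eq_univ, image_univ, Subtype.range_coe]
  have hcompl :
      Nonempty (↥(Subtype.val ⁻¹' s : Set Z)ᶜ ≃ ↥(range fun x => (e' x : Z))ᶜ) := by
    rw [hrange, ← Cardinal.eq]
    exact (mk_congr (subtypeSubtypeEquivSubtypeInter (· ∈ Z) (· ∉ s))).trans
      (h.trans (mk_congr (subtypeSubtypeEquivSubtypeInter (· ∈ Z) (· ∉ t))).symm)
  obtain ⟨g, hg⟩ := extend_function (e'.toEmbedding.trans (Function.Embedding.subtype _)) hcompl
  exact ⟨g, fun x hx => congrArg Subtype.val (hg ⟨⟨x, hx.1⟩, hx.2⟩)⟩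

theorem Function.End.isUnitRegular_iff {α : Type*} {f : Function.End α} :
    IsUnitRegular f ↔ ∃ g : Perm α, ∀ x, f (g (f x)) = f x :=
  ⟨fun ⟨u, hu⟩ => ⟨Perm.equivUnitsEnd.symm u, congrFun hu⟩,
    fun ⟨g, hg⟩ => ⟨Perm.equivUnitsEnd g, funext hg⟩⟩

theorem Tbar.isUnitRegular_mk_iff {X : Type*} {Y : Set X} {f : Function.End X}
    (hf : ∀ x ∈ Y, f x ∈ Y) :
    IsUnitRegular (⟨f, hf⟩ : Tbar X Y) ↔
      ∃ g : Perm X, (∀ x, g x ∈ Y ↔ x ∈ Y) ∧ ∀ x, f (g (f x)) = f x := by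
  constructor
  · rintro ⟨u, hu⟩
    let g := Perm.equivUnitsEnd.symm (Units.map (Tbar X Y).subtype u)
    have hgY : ∀ x ∈ Y, g x ∈ Y := (u : Tbar X Y).2
    have hgY' : ∀ x ∈ Y, g.symm x ∈ Y := (↑u⁻¹ : Tbar X Y).2
    exact ⟨g, fun x => ⟨fun h => g.symm_apply_apply x ▸ hgY' _ h, hgY x⟩,
      congrFun (congrArg Subtype.val hu)⟩
  · rintro ⟨g, hgY, hfg⟩
    have hgY' : ∀ x ∈ Y, g.symm x ∈ Y := fun x hx => (hgY _).1 (by rwa [g.apply_symm_apply])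
    exact ⟨⟨⟨⇑g, fun x => (hgY x).2⟩, ⟨⇑g.symm, hgY'⟩,
      Subtype.ext (funext g.apply_symm_apply), Subtype.ext (funext g.symm_apply_apply)⟩,
      Subtype.ext (funext hfg)⟩

section Construction

variable {X : Type*} {f : X → X} {Y Tf : Set X}

theorem mem_of_apply_mem_of_isTransversal (hii : f '' Y = Y ∩ range f) (hTf : IsTransversal f Tf)
    (hT' : IsTransversalOn f Y (Y ∩ Tf)) {t : X} (ht : t ∈ Tf) (hft : f t ∈ Y) : t ∈ Y := by
  obtain ⟨t', ht', he⟩ : f t ∈ f '' (Y ∩ Tf) := by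
    rw [hT'.image_eq, hii]
    exact ⟨hft, mem_range_self t⟩
  rw [hTf.bijOn.injOn ht'.2 ht he] at ht'
  exact ht'.1

theorem bijOn_compl_inter_of_isTransversal (hf : ∀ x ∈ Y, f x ∈ Y)
    (hii : f '' Y = Y ∩ range f) (hTf : IsTransversal f Tf)
    (hT' : IsTransversalOn f Y (Y ∩ Tf)) : BijOn f (Yᶜ ∩ Tf) (Yᶜ ∩ range f) := by
  refine ⟨fun t ht => ⟨fun hY => ht.1 (mem_of_apply_mem_of_isTransversal hii hTf hT' ht.2 hY),
    mem_range_self t⟩, hTf.bijOn.injOn.mono inter_subset_right, ?_⟩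
  rintro y ⟨hy, hr⟩
  obtain ⟨t, ht, rfl⟩ := hTf.bijOn.surjOn hr
  exact ⟨t, ⟨fun htY => hy (hf t htY), ht⟩, rfl⟩

theorem exists_perm_compl_of_isTransversal (hf : ∀ x ∈ Y, f x ∈ Y)
    (hii : f '' Y = Y ∩ range f) (hTf : IsTransversal f Tf)
    (hT' : IsTransversalOn f Y (Y ∩ Tf)) (hcard : #↥(Yᶜ \ Tf) = #↥(Yᶜ \ range f)) :
    ∃ g : Perm ↥Yᶜ, ∀ x : ↥Yᶜ, ↑x ∈ range f → f (g x) = x := by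
  let e := (bijOn_compl_inter_of_isTransversal hf hii hTf hT').equiv f
  obtain ⟨g, hg⟩ := Perm.exists_subtype_extend e.symm hcard.symm
  refine ⟨g, fun x hx => ?_⟩
  rw [hg x ⟨x.2, hx⟩]
  exact congrArg Subtype.val (e.apply_symm_apply ⟨x, x.2, hx⟩)

theorem exists_perm_of_isTransversal (hf : ∀ x ∈ Y, f x ∈ Y) (w : Perm Y)
    (hw : ∀ y, restrictEnd f hf (w (restrictEnd f hf y)) = restrictEnd f hf y)
    (hii : f '' Y = Y ∩ range f) (hTf : IsTransversal f Tf)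
    (hT' : IsTransversalOn f Y (Y ∩ Tf)) (hcard : #↥(Yᶜ \ Tf) = #↥(Yᶜ \ range f)) :
    ∃ g : Perm X, (∀ x, g x ∈ Y ↔ x ∈ Y) ∧ ∀ x, f (g (f x)) = f x := by
  classical
  obtain ⟨gN, hgN⟩ := exists_perm_compl_of_isTransversal hf hii hTf hT' hcard
  refine ⟨Perm.subtypeCongr w gN, fun x => ?_, fun x => ?_⟩
  · by_cases hx : x ∈ Y
    · rw [Perm.subtypeCongr.left_apply _ _ hx]
      exact iff_of_true (w ⟨x, hx⟩).2 hx
    · rw [Perm.subtypeCongr.right_apply _ _ hx]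
      exact iff_of_false (gN ⟨x, hx⟩).2 hx
  · by_cases hx : f x ∈ Y
    · obtain ⟨y, hy, hyx⟩ : f x ∈ f '' Y := hii ▸ ⟨hx, mem_range_self x⟩
      have hrestrict : (⟨f x, hx⟩ : Y) = restrictEnd f hf ⟨y, hy⟩ :=
        Subtype.ext hyx.symm
      rw [Perm.subtypeCongr.left_apply _ _ hx, hrestrict]
      exact (congrArg Subtype.val (hw ⟨y, hy⟩)).trans hyx
    · rw [Perm.subtypeCongr.right_apply _ _ hx]
      exact hgN _ (mem_range_self x)

end Construction

theorem stmt1_general {X : Type*} (Y : Set X)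
    (f : Function.End X) (hf : ∀ x ∈ Y, f x ∈ Y) :
    IsUnitRegular (⟨f, hf⟩ : Tbar X Y) ↔
      (IsUnitRegular (restrictEnd f hf) ∧
       f '' Y = Y ∩ Set.range f ∧
       ∃ Tf T' : Set X, IsTransversal f Tf ∧ IsTransversalOn f Y T' ∧ T' = Y ∩ Tf ∧
         Cardinal.mk ↥(Tfᶜ \ (Y \ T')) =
           Cardinal.mk ↥((Set.range f)ᶜ \ (Y \ f '' Y))) := by
  rw [Tbar.isUnitRegular_mk_iff, Function.End.isUnitRegular_iff]
  constructor
  · rintro ⟨g, hgY, hfg⟩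
    have hg : ∀ x ∈ Y, g x ∈ Y := fun x => (hgY x).2
    refine ⟨⟨g.subtypePerm hgY, fun y => Subtype.ext (hfg y)⟩, image_eq_inter_range hfg hf hg,
      g '' range f, _, isTransversal_image_range hfg, isTransversalOn_inter_image_range hfg hf hg,
      rfl, ?_⟩
    rw [compl_sdiff_sdiff_of_subset Y inter_subset_right,
      compl_sdiff_sdiff_of_subset Y (image_subset_range f Y), ← mk_preimage_equiv g,
      preimage_sdiff, preimage_compl, g.preimage_image, show g ⁻¹' Y = Y from ext hgY]
  · rintro ⟨⟨w, hw⟩, hii, Tf, _, hTf, hT', rfl, hcard⟩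
    rw [compl_sdiff_sdiff_of_subset Y inter_subset_right,
      compl_sdiff_sdiff_of_subset Y (image_subset_range f Y)] at hcard
    exact exists_perm_of_isTransversal hf w hw hii hTf hT' hcard

theorem stmt1 {X : Type*} [Nonempty X] (Y : Set X) (hY : Y.Nonempty)
    (f : Function.End X) (hf : ∀ x ∈ Y, f x ∈ Y) :
    IsUnitRegular (⟨f, hf⟩ : Tbar X Y) ↔
      (IsUnitRegular (restrictEnd f hf) ∧
       f '' Y = Y ∩ Set.range f ∧
       ∃ Tf T' : Set X, IsTransversal f Tf ∧ IsTransversalOn f Y T' ∧ T' = Y ∩ Tf ∧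
         Cardinal.mk ↥(Tfᶜ \ (Y \ T')) =
           Cardinal.mk ↥((Set.range f)ᶜ \ (Y \ f '' Y))) :=
  stmt1_general Y f hf
end

section
/- Let X be a nonempty set and Y a nonempty subset of X. Then f(Y) = Y ∩ f(X) holds for every f ∈ T̄(X,Y) if and only if Y is a singleton or Y = X. -/
theorem stmt2 {X : Type*} [Nonempty X] (Y : Set X) (hY : Y.Nonempty) :
    (∀ f : X → X, (∀ x ∈ Y, f x ∈ Y) → f '' Y = Y ∩ Set.range f) ↔
      ((∃ a, Y = {a}) ∨ Y = Set.univ) := by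
  constructor
  · intro h
    by_contra hc
    push_neg at hc
    obtain ⟨hsing, huniv⟩ := hc
    -- Y has two distinct elements
    obtain ⟨a, ha⟩ := hY
    have hb : ∃ b ∈ Y, b ≠ a := by
      by_contra hb
      push_neg at hb
      exact hsing a (Set.eq_singleton_iff_unique_mem.mpr ⟨ha, hb⟩)
    obtain ⟨b, hbY, hba⟩ := hb
    -- there is c ∉ Y
    have hc : ∃ c, c ∉ Y := by
      by_contra hc
      push_neg at hc
      exact huniv (Set.eq_univ_of_forall hc)
    obtain ⟨c, hcY⟩ := hc
    classical
    set f : X → X := fun x => if x ∈ Y then a else b with hf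
    have hmaps : ∀ x ∈ Y, f x ∈ Y := by
      intro x hx
      simp [hf, hx, ha]
    have := h f hmaps
    have hbmem : b ∈ Y ∩ Set.range f := ⟨hbY, c, by simp [hf, hcY]⟩
    rw [← this] at hbmem
    obtain ⟨x, hx, hfx⟩ := hbmem
    simp [hf, hx] at hfx
    exact hba hfx.symm
  · rintro (⟨a, rfl⟩ | rfl) <;> intro f hmaps
    · have hfa : f a ∈ ({a} : Set X) := hmaps a rfl
      simp at hfa
      ext y
      simp only [Set.image_singleton, hfa, Set.mem_singleton_iff, Set.mem_inter_iff,
        Set.mem_range]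
      constructor
      · intro hy; exact ⟨hy, a, by rw [hfa, hy]⟩
      · rintro ⟨rfl, _⟩; rfl
    · simp [Set.image_univ]
end

section
/- Let X be a nonempty set and Y a nonempty subset of X. The monoid T̄(X,Y) is unit-regular (i.e. every element is unit-regular) if and only if both of the following hold: (i) Y is a singleton or Y = X; (ii) X is finite. -/
open Function Set

theorem IsUnitRegular.isUnit_of_isLeftRegular {M : Type*} [Monoid M] {s : M}
    (h : IsUnitRegular s) (hs : IsLeftRegular s) : IsUnit s := by
  obtain ⟨u, hu⟩ := h
  have hus : (u : M) * s = 1 := hs (show s * (u * s) = s * 1 by rw [← mul_assoc, hu, mul_one])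
  exact Units.mul_eq_one_iff_inv_eq.1 hus ▸ u⁻¹.isUnit

theorem Infinite.exists_injective_not_surjective (α : Type*) [Infinite α] :
    ∃ g : α → α, Injective g ∧ ¬Surjective g := by
  obtain ⟨e⟩ : Nonempty (Option α ≃ α) := Cardinal.eq.1 <| by
    rw [Cardinal.mk_option, Cardinal.add_one_eq (Cardinal.aleph0_le_mk α)]
  refine ⟨e ∘ some, e.injective.comp (Option.some_injective α), fun h => ?_⟩
  obtain ⟨x, hx⟩ := h (e none)
  exact Option.some_ne_none x (e.injective hx)

theorem Set.Infinite.exists_injective_not_surjective_preimage_eq {X : Type*} {S : Set X}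
    (hS : S.Infinite) : ∃ f : X → X, Injective f ∧ ¬Surjective f ∧ f ⁻¹' S = S := by
  classical
  have : Infinite S := hS.to_subtype
  obtain ⟨g, hg, hg'⟩ := Infinite.exists_injective_not_surjective S
  let e := Equiv.sumCompl (· ∈ S)
  refine ⟨e ∘ Sum.map g id ∘ e.symm, e.injective.comp <|
    (Sum.map_injective.2 ⟨hg, injective_id⟩).comp e.symm.injective, ?_, Set.ext fun x => ?_⟩
  · rw [EquivLike.comp_surjective, EquivLike.surjective_comp, Sum.map_surjective]
    exact fun h => hg' h.1
  · by_cases hx : x ∈ S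
    · simp [e, Equiv.sumCompl_symm_apply_of_pos hx, hx]
    · simp [e, Equiv.sumCompl_symm_apply_of_neg hx, hx]

theorem Function.exists_perm_comp_comp_eq {X : Type*} [Finite X] (f : X → X) :
    ∃ σ : Equiv.Perm X, f ∘ σ ∘ f = f ∧ ∀ a, f a = a → σ a = a := by
  classical
  let g y := if f y = y then y else if h : y ∈ range f then h.choose else y
  have hg : LeftInvOn f g (range f) := by
    intro y hy
    dsimp only [g]
    split_ifs with h
    exacts [h, hy.choose_spec]
  let σ := (Equiv.Set.imageOfInjOn g _ hg.injOn).extendSubtype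
  have hσ : ∀ y ∈ range f, σ y = g y := fun y hy =>
    Equiv.extendSubtype_apply_of_mem _ y hy
  refine ⟨σ, funext fun x => ?_, fun a ha => ?_⟩
  · simp only [comp_apply, hσ _ (mem_range_self x), hg (mem_range_self x)]
  · simp [hσ a ⟨a, ha⟩, g, ha]

namespace Tbar

variable {X : Type*} {Y : Set X}

theorem inter_range_subset_image_of_isUnitRegular {f : Tbar X Y} (hf : IsUnitRegular f) :
    Y ∩ range f.1 ⊆ f.1 '' Y := by
  obtain ⟨u, hu⟩ := hf
  rintro _ ⟨hy, x, rfl⟩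
  exact ⟨(u : Tbar X Y).1 (f.1 x), (u : Tbar X Y).2 _ hy, congr_fun (congrArg Subtype.val hu) x⟩

theorem exists_not_isUnitRegular {a b c : X} (ha : a ∈ Y) (hb : b ∈ Y) (hab : a ≠ b)
    (hc : c ∉ Y) : ∃ f : Tbar X Y, ¬IsUnitRegular f := by
  classical
  have hcb : c ≠ b := fun h => hc (h ▸ hb)
  let f : X → X := fun x => if x = c then b else if x = b then a else x
  have hf : f ∈ Tbar X Y := fun x hx => by
    have hxc : x ≠ c := fun h => hc (h ▸ hx)
    by_cases hxb : x = b <;> simp [f, hxc, hxb, hcb.symm, ha, hx]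
  refine ⟨⟨f, hf⟩, fun h => ?_⟩
  obtain ⟨z, hz, hzb⟩ := inter_range_subset_image_of_isUnitRegular h ⟨hb, c, by simp [f]⟩
  have hzc : z ≠ c := fun h => hc (h ▸ hz)
  by_cases hzb' : z = b <;> simp_all [f]

theorem surjective_of_isUnitRegular {f : Tbar X Y} (hf : IsUnitRegular f)
    (hinj : Injective f.1) : Surjective f.1 := by
  have hreg : IsLeftRegular f := fun g h hgh =>
    Subtype.ext (hinj.comp_left (congrArg Subtype.val hgh))
  obtain ⟨u, hu⟩ := (hf.isUnit_of_isLeftRegular hreg).map (Tbar X Y).subtype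
  change Surjective ((Tbar X Y).subtype f)
  rw [← hu]
  exact (Equiv.Perm.equivUnitsEnd.symm u).surjective

theorem isUnitRegular_of_perm {f : Tbar X Y} (σ : Equiv.Perm X) (hσ : f.1 ∘ σ ∘ f.1 = f.1)
    (hY : MapsTo σ Y Y) (hY' : MapsTo σ.symm Y Y) : IsUnitRegular f :=
  ⟨⟨⟨(⇑σ : X → X), hY⟩, ⟨(⇑σ.symm : X → X), hY'⟩,
    Subtype.ext σ.self_comp_symm, Subtype.ext σ.symm_comp_self⟩, Subtype.ext hσ⟩

theorem eq_singleton_or_eq_univ_of_forall_isUnitRegular (hY : Y.Nonempty)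
    (h : ∀ f : Tbar X Y, IsUnitRegular f) : (∃ a, Y = {a}) ∨ Y = univ := by
  refine hY.exists_eq_singleton_or_nontrivial.imp_right fun ⟨a, ha, b, hb, hab⟩ => ?_
  by_contra hne
  obtain ⟨c, hc⟩ := (ne_univ_iff_exists_notMem Y).1 hne
  obtain ⟨f, hf⟩ := exists_not_isUnitRegular ha hb hab hc
  exact hf (h f)

theorem exists_injective_not_surjective [Infinite X] (Y : Set X) :
    ∃ f : Tbar X Y, Injective f.1 ∧ ¬Surjective f.1 := by
  have : (Y ∪ Yᶜ).Infinite := by rw [union_compl_self]; exact infinite_univ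
  rcases infinite_union.1 this with hY | hY
  · obtain ⟨f, hinj, hsurj, hf⟩ := hY.exists_injective_not_surjective_preimage_eq
    exact ⟨⟨f, fun x hx => by rwa [← hf] at hx⟩, hinj, hsurj⟩
  · obtain ⟨f, hinj, hsurj, hf⟩ := hY.exists_injective_not_surjective_preimage_eq
    rw [preimage_compl, compl_inj_iff] at hf
    exact ⟨⟨f, fun x hx => by rwa [← hf] at hx⟩, hinj, hsurj⟩

theorem isUnitRegular_of_finite [Finite X] (hY : (∃ a, Y = {a}) ∨ Y = univ) (f : Tbar X Y) :
    IsUnitRegular f := by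
  obtain ⟨σ, hσ, hfix⟩ := f.1.exists_perm_comp_comp_eq
  rcases hY with ⟨a, rfl⟩ | rfl
  · have hσa : σ a = a := hfix a (f.2 a rfl)
    exact isUnitRegular_of_perm σ hσ (mapsTo_singleton.2 hσa)
      (mapsTo_singleton.2 (σ.symm_apply_eq.2 hσa.symm))
  · exact isUnitRegular_of_perm σ hσ (mapsTo_univ _ _) (mapsTo_univ _ _)

end Tbar

theorem stmt3_general {X : Type*} (Y : Set X) (hY : Y.Nonempty) :
    (∀ f : Tbar X Y, IsUnitRegular f) ↔
      (((∃ a, Y = {a}) ∨ Y = Set.univ) ∧ Finite X) := by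
  refine ⟨fun h => ⟨Tbar.eq_singleton_or_eq_univ_of_forall_isUnitRegular hY h, ?_⟩,
    fun ⟨hY', _⟩ => Tbar.isUnitRegular_of_finite hY'⟩
  by_contra hX
  have : Infinite X := not_finite_iff_infinite.1 hX
  obtain ⟨f, hinj, hsurj⟩ := Tbar.exists_injective_not_surjective Y
  exact hsurj (Tbar.surjective_of_isUnitRegular (h f) hinj)

theorem stmt3 {X : Type*} [Nonempty X] (Y : Set X) (hY : Y.Nonempty) :
    (∀ f : Tbar X Y, IsUnitRegular f) ↔
      (((∃ a, Y = {a}) ∨ Y = Set.univ) ∧ Finite X) :=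
  stmt3_general Y hY
end

section
/- Let V be a vector space over a field, W a subspace of V, and f ∈ L̄(V,W). Then there exists a subspace U of V such that U (as a subset of V) is a transversal of ker(f) and U ∩ W is a transversal of ker(f↾W), where f↾W : W → W is the induced map. -/
theorem stmt5 {K V : Type*} [Field K] [AddCommGroup V] [Module K V]
    (W : Submodule K V) (f : V →ₗ[K] V) (hf : ∀ w ∈ W, f w ∈ W) :
    ∃ U : Submodule K V, IsTransversal (f : V → V) ↑U ∧
      IsTransversalOn (f : V → V) ↑W ((↑U : Set V) ∩ ↑W) := by
  classical
  set N := LinearMap.ker f with hN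
  obtain ⟨q, hq⟩ := Submodule.exists_isCompl (N.comap W.subtype)
  set U₁ : Submodule K V := q.map W.subtype with hU₁def
  have hU₁W : U₁ ≤ W := Submodule.map_subtype_le _ _
  have hWsup : U₁ ⊔ (N ⊓ W) = W := by
    have h1 : Submodule.map W.subtype (q ⊔ N.comap W.subtype) = W := by
      rw [sup_comm, hq.sup_eq_top]
      exact Submodule.map_subtype_top W
    rw [Submodule.map_sup, Submodule.map_comap_subtype] at h1
    rwa [inf_comm] at h1
  have hU₁N : ∀ x ∈ U₁, f x = 0 → x = 0 := by
    intro x hx hfx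
    obtain ⟨y, hy, rfl⟩ := Submodule.mem_map.mp hx
    have hy' : y ∈ N.comap W.subtype := by
      simpa [hN, LinearMap.mem_ker] using hfx
    have : y = 0 := Submodule.disjoint_def.mp hq.disjoint y hy' hy
    simp [this]
  obtain ⟨U₂, hU₂⟩ := Submodule.exists_isCompl (U₁ ⊔ N)
  have hUN : ∀ x ∈ U₁ ⊔ U₂, f x = 0 → x = 0 := by
    intro x hx hfx
    rw [Submodule.mem_sup] at hx
    obtain ⟨a, ha, b, hb, rfl⟩ := hx
    have hb0 : b = 0 := by
      have hbmem : b ∈ U₁ ⊔ N := by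
        have : b = (a + b) - a := by abel
        rw [this]
        exact sub_mem (Submodule.mem_sup_right (by simpa [hN, LinearMap.mem_ker] using hfx))
          (Submodule.mem_sup_left ha)
      exact Submodule.disjoint_def.mp hU₂.disjoint b hbmem hb
    subst hb0
    simpa using hU₁N a ha (by simpa using hfx)
  have huniq : ∀ t t', t ∈ U₁ ⊔ U₂ → t' ∈ U₁ ⊔ U₂ → f t = f t' → t = t' := by
    intro t t' ht ht' hff
    have : t - t' = 0 := hUN _ (sub_mem ht ht') (by simp [map_sub, hff])
    exact sub_eq_zero.mp this
  refine ⟨U₁ ⊔ U₂, ?_, ?_, ?_⟩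
  · intro x
    have hx : x ∈ (U₁ ⊔ N) ⊔ U₂ := by rw [hU₂.sup_eq_top]; trivial
    rw [Submodule.mem_sup] at hx
    obtain ⟨y, hy, b, hb, rfl⟩ := hx
    rw [Submodule.mem_sup] at hy
    obtain ⟨a, ha, n, hn, rfl⟩ := hy
    have hn0 : f n = 0 := by simpa [hN, LinearMap.mem_ker] using hn
    refine ⟨a + b, ⟨add_mem (Submodule.mem_sup_left ha) (Submodule.mem_sup_right hb), by
      simp [map_add, hn0]⟩, ?_⟩
    rintro t ⟨htU, htf⟩
    exact huniq t (a + b) htU (add_mem (Submodule.mem_sup_left ha) (Submodule.mem_sup_right hb))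
      (by rw [htf]; simp [map_add, hn0])
  · exact Set.inter_subset_right
  · intro x hxW
    have hx : x ∈ U₁ ⊔ (N ⊓ W) := by rw [hWsup]; exact hxW
    rw [Submodule.mem_sup] at hx
    obtain ⟨a, ha, n, hn, rfl⟩ := hx
    have hn0 : f n = 0 := by
      have := hn.1
      simpa [hN, LinearMap.mem_ker] using this
    refine ⟨a, ⟨⟨Submodule.mem_sup_left ha, hU₁W ha⟩, by simp [map_add, hn0]⟩, ?_⟩
    rintro t ⟨⟨htU, htW⟩, htf⟩
    exact huniq t a htU (Submodule.mem_sup_left ha) (by rw [htf]; simp [map_add, hn0])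
end

section
/- Let V be a vector space over a field, W a subspace of V, and f ∈ L̄(V,W). Then f is unit-regular in L̄(V,W) if and only if the following three conditions hold: (i) the range of f↾W equals W ∩ R(f), i.e. f(W) = W ∩ R(f); (ii) the dimension of the kernel of f↾W equals the dimension of the quotient space W / f(W); (iii) there exists a subspace T of V such that T is a transversal of ker(f), W ∩ T is a transversal of ker(f↾W), and dim(V/(W + T)) = dim(V/(W + R(f))). -/
/-- The monoid `L̄(V, W)` of all linear self-maps of `V` leaving the subspace `W` invariant. -/
def Lbar (K V : Type*) [Field K] [AddCommGroup V] [Module K V] (W : Submodule K V) :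
    Submonoid (Module.End K V) where
  carrier := {f | ∀ w ∈ W, f w ∈ W}
  one_mem' := fun w hw => hw
  mul_mem' := fun {f g} hf hg w hw => hf _ (hg w hw)

/-!
Unit-regularity of `f` in `L̄(V, W)` means `f g f = f` for an automorphism `g` of `V` with
`g(W) = W`. Given such a `g`, the subspace `T = g(R(f))` is the required transversal, and `g↾W`
makes `f↾W` unit-regular, so its kernel and cokernel have the same dimension.

Conversely, `f` maps `T` isomorphically onto `R(f)`, and `W ∩ T` onto `W ∩ R(f) = f(W)`.
By (ii) the subspaces `W ∩ T` and `W ∩ R(f)` have the same codimension in `W` (namely the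
dimension of `ker (f↾W)`), and by (iii) `W + T` and `W + R(f)` have the same codimension in `V`.
This is exactly what is needed to extend `f↾T : T ≃ R(f)` to an automorphism `u` of `V` with
`u(W) = W`, and then `g = u⁻¹` works.
-/

open Submodule LinearMap

section Ring

variable {R M : Type*} [Ring R] [AddCommGroup M] [Module R M]

noncomputable def Submodule.prodEquivSupOfDisjoint {P Q : Submodule R M} (h : Disjoint P Q) :
    (P × Q) ≃ₗ[R] ↥(P ⊔ Q) :=
  LinearEquiv.ofBijective
    ((P.subtype.coprod Q.subtype).codRestrict (P ⊔ Q) fun x => by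
      simpa using add_mem_sup x.1.2 x.2.2)
    ⟨by rw [← ker_eq_bot, ker_codRestrict, ker_coprod_of_disjoint_range] <;> simp [h], by
      rintro ⟨x, hx⟩
      obtain ⟨p, hp, q, hq, rfl⟩ := mem_sup.1 hx
      exact ⟨(⟨p, hp⟩, ⟨q, hq⟩), rfl⟩⟩

@[simp]
theorem Submodule.coe_prodEquivSupOfDisjoint_apply {P Q : Submodule R M} (h : Disjoint P Q)
    (x : P × Q) : (prodEquivSupOfDisjoint h x : M) = x.1 + x.2 :=
  rfl

theorem Submodule.exists_linearEquiv_sup_restrict_eq {P Q P' Q' : Submodule R M}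
    (h : Disjoint P Q) (h' : Disjoint P' Q') (e₁ : P ≃ₗ[R] P') (e₂ : Q ≃ₗ[R] Q') :
    ∃ e : ↥(P ⊔ Q) ≃ₗ[R] ↥(P' ⊔ Q'),
      (∀ x : P, (e (inclusion le_sup_left x) : M) = e₁ x) ∧
        ∀ x : Q, (e (inclusion le_sup_right x) : M) = e₂ x := by
  set S := prodEquivSupOfDisjoint h
  have hS₁ (x : P) : S.symm (inclusion le_sup_left x) = (x, 0) :=
    S.symm_apply_eq.2 (Subtype.ext (by simp [S]))
  have hS₂ (x : Q) : S.symm (inclusion le_sup_right x) = (0, x) :=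
    S.symm_apply_eq.2 (Subtype.ext (by simp [S]))
  refine ⟨S.symm ≪≫ₗ e₁.prodCongr e₂ ≪≫ₗ prodEquivSupOfDisjoint h', fun x => ?_, fun x => ?_⟩
  · simp [hS₁]
  · simp [hS₂]

theorem Submodule.map_eq_of_forall_apply_eq {N : Type*} [AddCommGroup N] [Module R N]
    (u : M →ₗ[R] N) {P : Submodule R M} {P' : Submodule R N} (φ : P ≃ₗ[R] P')
    (h : ∀ x : P, u x = φ x) : P.map u = P' := by
  ext y
  constructor
  · rintro ⟨x, hx, rfl⟩
    simp [h ⟨x, hx⟩]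
  · intro hy
    exact ⟨φ.symm ⟨y, hy⟩, (φ.symm _).2, by simp [h]⟩

theorem LinearMap.isCompl_ker_of_disjoint {N : Type*} [AddCommGroup N] [Module R N]
    {φ : M →ₗ[R] N} {S : Submodule R M} (hd : Disjoint S (ker φ))
    (hS : ∀ x, ∃ s ∈ S, φ s = φ x) : IsCompl S (ker φ) := by
  refine ⟨hd, codisjoint_iff.2 (eq_top_iff.2 fun x _ => ?_)⟩
  obtain ⟨s, hs, hφ⟩ := hS x
  exact mem_sup.2 ⟨s, hs, x - s, by simp [hφ], add_sub_cancel _ _⟩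

theorem LinearMap.rank_ker_eq_rank_quotient_range_of_apply_apply_eq (f : Module.End R M)
    (g : M ≃ₗ[R] M) (h : ∀ x, f (g (f x)) = f x) :
    Module.rank R (ker f) = Module.rank R (M ⧸ range f) := by
  set p := f ∘ₗ (g : M →ₗ[R] M)
  have hp : IsIdempotentElem p := LinearMap.ext fun y => h (g y)
  have hrange : range p = range f := range_comp_of_range_eq_top f g.range
  have hker : ker p = (ker f).map (g.symm : M →ₗ[R] M) := by
    rw [ker_comp, comap_equiv_eq_map_symm]
  rw [← hrange, (quotientEquivOfIsCompl _ _ hp.isCompl).rank_eq, hker, g.symm.rank_map_eq]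

end Ring

section DivisionRing

variable {K M : Type*} [DivisionRing K] [AddCommGroup M] [Module K M]

theorem Submodule.exists_linearEquiv_restrict_eq_of_rank_quotient_eq {X Y : Submodule K M}
    (e : X ≃ₗ[K] Y) (h : Module.rank K (M ⧸ X) = Module.rank K (M ⧸ Y)) :
    ∃ u : M ≃ₗ[K] M, ∀ x : X, u x = e x := by
  obtain ⟨C, hC⟩ := X.exists_isCompl
  obtain ⟨C', hC'⟩ := Y.exists_isCompl
  have hrank : Module.rank K C = Module.rank K C' := by
    rw [← (quotientEquivOfIsCompl _ _ hC).rank_eq, ← (quotientEquivOfIsCompl _ _ hC').rank_eq, h]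
  obtain ⟨ρ, hρ, -⟩ := exists_linearEquiv_sup_restrict_eq hC.disjoint hC'.disjoint e
    (LinearEquiv.ofRankEq _ _ hrank)
  exact ⟨(LinearEquiv.ofTop _ hC.sup_eq_top).symm ≪≫ₗ ρ ≪≫ₗ LinearEquiv.ofTop _ hC'.sup_eq_top,
    fun x => hρ x⟩

theorem Submodule.exists_disjoint_inf_sup_eq_rank_eq (X W : Submodule K M) :
    ∃ A, Disjoint X A ∧ X ⊓ W ⊔ A = W ∧ X ⊔ A = X ⊔ W ∧
      Module.rank K A = Module.rank K (W ⧸ X.comap W.subtype) := by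
  obtain ⟨A₀, hA₀⟩ := (X.comap W.subtype).exists_isCompl
  have hc := W.mapIic.isCompl_iff.1 hA₀
  simp only [Set.Iic.isCompl_iff, coe_mapIic_apply, map_comap_subtype, inf_comm] at hc
  obtain ⟨hd, hs⟩ := hc
  refine ⟨A₀.map W.subtype, disjoint_def.2 fun x hxX hxA => disjoint_def.1 hd x
    ⟨hxX, map_subtype_le _ _ hxA⟩ hxA, hs, ?_, ?_⟩
  · conv_rhs => rw [← hs, ← sup_assoc, sup_inf_self]
  · rw [(quotientEquivOfIsCompl _ _ hA₀).rank_eq]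
    exact (A₀.equivMapOfInjective _ W.injective_subtype).rank_eq.symm

theorem Submodule.exists_linearEquiv_restrict_eq_and_map_eq {W X Y : Submodule K M}
    (e : X ≃ₗ[K] Y) (he : ∀ x : X, (x : M) ∈ W ↔ (e x : M) ∈ W)
    (hW : Module.rank K (W ⧸ X.comap W.subtype) = Module.rank K (W ⧸ Y.comap W.subtype))
    (h : Module.rank K (M ⧸ (W ⊔ X)) = Module.rank K (M ⧸ (W ⊔ Y))) :
    ∃ u : M ≃ₗ[K] M, (∀ x : X, u x = e x) ∧ W.map (u : M →ₗ[K] M) = W := by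
  -- With `W = (X ∩ W) ⊕ A = (Y ∩ W) ⊕ A'`, the sum of `e` and some `A ≃ A'` is an isomorphism
  -- `X ⊕ A ≃ Y ⊕ A'` between subspaces of the same codimension, since `X + A = W + X`.
  obtain ⟨A, hXA, hXAW, hXA_sup, hA⟩ := exists_disjoint_inf_sup_eq_rank_eq X W
  obtain ⟨A', hYA', hYA'W, hYA'_sup, hA'⟩ := exists_disjoint_inf_sup_eq_rank_eq Y W
  let φ : A ≃ₗ[K] A' := LinearEquiv.ofRankEq A A' (by rw [hA, hW, hA'])
  obtain ⟨ρ, hρX, hρA⟩ := exists_linearEquiv_sup_restrict_eq hXA hYA' e φ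
  obtain ⟨u, hu⟩ := exists_linearEquiv_restrict_eq_of_rank_quotient_eq ρ (by
    rwa [hXA_sup, hYA'_sup, sup_comm X, sup_comm Y])
  have huX (x : X) : u x = e x := (hu _).trans (hρX x)
  have hXW : (X ⊓ W).map (u : M →ₗ[K] M) = Y ⊓ W := by
    ext y
    constructor
    · rintro ⟨x, ⟨hxX, hxW⟩, rfl⟩
      exact ⟨by simp [huX ⟨x, hxX⟩], by simpa [huX ⟨x, hxX⟩] using (he ⟨x, hxX⟩).1 hxW⟩
    · rintro ⟨hyY, hyW⟩
      refine ⟨e.symm ⟨y, hyY⟩, ⟨(e.symm _).2, (he _).2 (by simpa using hyW)⟩, ?_⟩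
      simp [huX]
  have hAA' : A.map (u : M →ₗ[K] M) = A' :=
    map_eq_of_forall_apply_eq u φ fun a => (hu _).trans (hρA a)
  refine ⟨u, huX, ?_⟩
  conv_lhs => rw [← hXAW]
  rw [Submodule.map_sup, hXW, hAA', hYA'W]

end DivisionRing

section Transversal

variable {α : Type*} {f g : α → α} {Y T : Set α}

theorem Set.image_eq_inter_range_of_apply_apply_eq (hf : MapsTo f Y Y) (hg : MapsTo g Y Y)
    (h : ∀ x, f (g (f x)) = f x) : f '' Y = Y ∩ Set.range f := by
  refine (Set.subset_inter hf.image_subset (Set.image_subset_range f Y)).antisymm ?_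
  rintro _ ⟨hy, x, rfl⟩
  exact ⟨g (f x), hg hy, h x⟩

theorem isTransversal_range_comp (h : ∀ x, f (g (f x)) = f x) :
    IsTransversal f (Set.range (g ∘ f)) := by
  refine fun x => ⟨g (f x), ⟨⟨x, rfl⟩, h x⟩, ?_⟩
  rintro _ ⟨⟨z, rfl⟩, hz⟩
  rw [Function.comp_apply, ← (h z).symm.trans hz]

theorem isTransversalOn_inter_range_comp (hf : Set.MapsTo f Y Y) (hg : Set.MapsTo g Y Y)
    (h : ∀ x, f (g (f x)) = f x) : IsTransversalOn f Y (Y ∩ Set.range (g ∘ f)) := by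
  refine ⟨Set.inter_subset_left, fun x hx => ⟨g (f x), ⟨⟨hg (hf hx), x, rfl⟩, h x⟩, ?_⟩⟩
  rintro _ ⟨⟨-, z, rfl⟩, hz⟩
  rw [Function.comp_apply, ← (h z).symm.trans hz]

theorem IsTransversal.mem_iff_apply_mem (hT : IsTransversal f T)
    (hTY : IsTransversalOn f Y (Y ∩ T)) (hf : Set.MapsTo f Y Y) (hi : f '' Y = Y ∩ Set.range f)
    {t : α} (ht : t ∈ T) : t ∈ Y ↔ f t ∈ Y := by
  refine ⟨fun htY => hf htY, fun hft => ?_⟩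
  obtain ⟨y, hy, hyt⟩ : f t ∈ f '' Y := hi ▸ ⟨hft, t, rfl⟩
  obtain ⟨s, ⟨⟨hsY, hsT⟩, hs⟩, -⟩ := hTY.2 y hy
  rwa [(hT t).unique ⟨ht, rfl⟩ ⟨hsT, hs.trans hyt⟩]

end Transversal

section LinearTransversal

variable {R V : Type*} [Ring R] [AddCommGroup V] [Module R V] {f : Module.End R V}
  {T : Submodule R V}

theorem IsTransversal.isCompl_ker (hT : IsTransversal f T) : IsCompl T (ker f) := by
  refine isCompl_ker_of_disjoint (disjoint_def.2 fun t ht hft => ?_) fun x => ?_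
  · exact (hT 0).unique ⟨ht, by simpa using hft⟩ ⟨T.zero_mem, rfl⟩
  · obtain ⟨t, ⟨ht, hft⟩, -⟩ := hT x
    exact ⟨t, ht, hft⟩

noncomputable def IsTransversal.linearEquivRange (hT : IsTransversal f T) : T ≃ₗ[R] range f :=
  (quotientEquivOfIsCompl _ _ hT.isCompl_ker.symm).symm ≪≫ₗ f.quotKerEquivRange

@[simp]
theorem IsTransversal.coe_linearEquivRange_apply (hT : IsTransversal f T) (t : T) :
    (hT.linearEquivRange t : V) = f t := by
  simp [linearEquivRange, quotientEquivOfIsCompl_symm_apply]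

theorem IsTransversalOn.rank_quotient_comap_eq_rank_ker {W : Submodule R V}
    (hf : ∀ w ∈ W, f w ∈ W) (hT : IsTransversal f T) (hTW : IsTransversalOn f W (W ∩ T)) :
    Module.rank R (W ⧸ T.comap W.subtype) = Module.rank R (ker (f.restrict hf)) := by
  refine (quotientEquivOfIsCompl _ _ (isCompl_ker_of_disjoint ?_ fun x => ?_)).rank_eq
  · rw [ker_restrict, disjoint_iff, ← comap_inf, hT.isCompl_ker.inf_eq_bot, comap_bot, ker_subtype]
  · obtain ⟨t, ⟨⟨htW, htT⟩, hft⟩, -⟩ := hTW.2 x x.2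
    exact ⟨⟨t, htW⟩, htT, Subtype.ext hft⟩

theorem LinearMap.range_restrict_eq_comap_of_image_eq {W : Submodule R V}
    (hf : ∀ w ∈ W, f w ∈ W) (hi : f '' W = (W : Set V) ∩ Set.range f) :
    range (f.restrict hf) = (range f).comap W.subtype := by
  rw [range_restrict, show W.map f = W ⊓ range f from
    SetLike.coe_injective (by simpa [coe_range] using hi), comap_inf, comap_subtype_self,
    top_inf_eq]

end LinearTransversal

theorem isUnitRegular_lbar_iff {K V : Type*} [Field K] [AddCommGroup V] [Module K V]
    {W : Submodule K V} {f : Module.End K V} (hf : ∀ w ∈ W, f w ∈ W) :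
    IsUnitRegular (⟨f, hf⟩ : Lbar K V W) ↔
      ∃ g : V ≃ₗ[K] V, W.map (g : V →ₗ[K] V) = W ∧ ∀ x, f (g (f x)) = f x := by
  constructor
  · rintro ⟨u, hu⟩
    let g : V ≃ₗ[K] V := .ofLinearMap (u : Lbar K V W).1 (↑u⁻¹ : Lbar K V W).1
      (congrArg Subtype.val u.mul_inv) (congrArg Subtype.val u.inv_mul)
    refine ⟨g, le_antisymm (map_le_iff_le_comap.2 (u : Lbar K V W).2) fun w hw => ?_,
      LinearMap.congr_fun (congrArg Subtype.val hu)⟩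
    exact (mem_map_equiv W (e := g)).2 ((↑u⁻¹ : Lbar K V W).2 w hw)
  · rintro ⟨g, hgW, h⟩
    have hg (w) (hw : w ∈ W) : g w ∈ W := hgW ▸ mem_map_of_mem hw
    have hg' (w) (hw : w ∈ W) : g.symm w ∈ W := (mem_map_equiv W).1 (hgW.symm ▸ hw)
    exact ⟨⟨⟨g, hg⟩, ⟨g.symm, hg'⟩, Subtype.ext (LinearMap.ext g.apply_symm_apply),
      Subtype.ext (LinearMap.ext g.symm_apply_apply)⟩, Subtype.ext (LinearMap.ext h)⟩

theorem stmt8 {K V : Type*} [Field K] [AddCommGroup V] [Module K V]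
    (W : Submodule K V) (f : Module.End K V) (hf : ∀ w ∈ W, f w ∈ W) :
    IsUnitRegular (⟨f, hf⟩ : Lbar K V W) ↔
      (f '' ↑W = (↑W : Set V) ∩ Set.range f ∧
       Module.rank K (LinearMap.ker (LinearMap.restrict f hf)) =
         Module.rank K (W ⧸ LinearMap.range (LinearMap.restrict f hf)) ∧
       ∃ T : Submodule K V, IsTransversal (f : V → V) ↑T ∧
         IsTransversalOn (f : V → V) ↑W ((↑W : Set V) ∩ ↑T) ∧
         Module.rank K (V ⧸ (W ⊔ T)) = Module.rank K (V ⧸ (W ⊔ LinearMap.range f))) := by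
  rw [isUnitRegular_lbar_iff]
  constructor
  · rintro ⟨g, hgW, h⟩
    have hg : Set.MapsTo g W W := fun w hw => hgW ▸ mem_map_of_mem hw
    have hrange : (range ((g : V →ₗ[K] V) ∘ₗ f) : Set V) = Set.range (g ∘ f) := by
      rw [coe_range]; rfl
    refine ⟨Set.image_eq_inter_range_of_apply_apply_eq hf hg h,
      rank_ker_eq_rank_quotient_range_of_apply_apply_eq _ (g.ofSubmodules W W hgW)
        fun x => Subtype.ext (h x),
      range ((g : V →ₗ[K] V) ∘ₗ f), hrange ▸ isTransversal_range_comp h,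
      hrange ▸ isTransversalOn_inter_range_comp hf hg h, ?_⟩
    exact (Quotient.equiv _ _ g (by rw [Submodule.map_sup, hgW, range_comp])).rank_eq.symm
  · rintro ⟨hi, hii, T, hT, hTW, hrank⟩
    obtain ⟨u, hu, huW⟩ := exists_linearEquiv_restrict_eq_and_map_eq hT.linearEquivRange
      (fun t => by rw [hT.coe_linearEquivRange_apply]; exact hT.mem_iff_apply_mem hTW hf hi t.2)
      (by rw [hTW.rank_quotient_comap_eq_rank_ker hf hT, hii,
        range_restrict_eq_comap_of_image_eq hf hi]) hrank
    refine ⟨u.symm, (map_symm_eq_iff u).2 huW, fun x => ?_⟩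
    obtain ⟨t, ht⟩ := hT.linearEquivRange.surjective ⟨f x, mem_range_self f x⟩
    have hut : u t = f x := (hu t).trans (congrArg Subtype.val ht)
    rw [← hut, u.symm_apply_apply, hu, hT.coe_linearEquivRange_apply]
end

section
/- Let V be a vector space over a field and f : V → V a linear map. Then f is unit-regular in the monoid L(V) if and only if nullity(f) = corank(f), i.e. the dimension of the kernel of f equals the dimension of the quotient space V/R(f). -/
open LinearMap Submodule

section Ring

variable {R M : Type*} [Ring R] [AddCommGroup M] [Module R M]

theorem Module.End.isUnitRegular_iff_exists_linearEquiv (f : Module.End R M) :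
    IsUnitRegular f ↔ ∃ e : M ≃ₗ[R] M, f ∘ₗ e ∘ₗ f = f := by
  constructor
  · rintro ⟨u, hu⟩
    exact ⟨GeneralLinearGroup.generalLinearEquiv R M u, hu⟩
  · rintro ⟨e, he⟩
    exact ⟨(GeneralLinearGroup.generalLinearEquiv R M).symm e, he⟩

theorem LinearMap.rank_ker_eq_rank_quotient_range_of_comp_comp_eq {f : Module.End R M}
    {e : M ≃ₗ[R] M} (he : f ∘ₗ e ∘ₗ f = f) :
    Module.rank R (ker f) = Module.rank R (M ⧸ range f) := by
  have hidem : IsIdempotentElem (f ∘ₗ e.toLinearMap) := by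
    change f ∘ₗ e ∘ₗ (f ∘ₗ e) = f ∘ₗ e.toLinearMap
    rw [← comp_assoc, ← comp_assoc, comp_assoc f, he]
  have hrange : range (f ∘ₗ e.toLinearMap) = range f :=
    le_antisymm (range_comp_le_range _ _) <| calc
      range f = range ((f ∘ₗ e.toLinearMap) ∘ₗ f) := by rw [comp_assoc, he]
      _ ≤ range (f ∘ₗ e.toLinearMap) := range_comp_le_range _ _
  have hker : ker (f ∘ₗ e.toLinearMap) = (ker f).map e.symm.toLinearMap := by
    rw [ker_comp, comap_equiv_eq_map_symm]
  calc Module.rank R (ker f) = Module.rank R (ker (f ∘ₗ e.toLinearMap)) := by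
        rw [hker, LinearEquiv.rank_map_eq]
    _ = Module.rank R (M ⧸ range f) :=
        (quotientEquivOfIsCompl _ _ (hrange ▸ hidem.isCompl)).rank_eq.symm

theorem LinearMap.comp_symm_comp_eq_of_eqOn_isCompl_ker {f : Module.End R M}
    {W : Submodule R M} (hW : IsCompl W (ker f)) {v : M ≃ₗ[R] M} (hv : ∀ w ∈ W, v w = f w) :
    f ∘ₗ v.symm.toLinearMap ∘ₗ f = f := by
  ext x
  obtain ⟨w, hw, k, hk, rfl⟩ := mem_sup.mp (hW.sup_eq_top ▸ mem_top : x ∈ W ⊔ ker f)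
  simp [mem_ker.mp hk, ← hv w hw]

end Ring

section DivisionRing

variable {K V : Type*} [DivisionRing K] [AddCommGroup V] [Module K V]

theorem LinearMap.exists_linearEquiv_comp_comp_eq_of_rank_ker_eq {f : Module.End K V}
    (hrank : Module.rank K (ker f) = Module.rank K (V ⧸ range f)) :
    ∃ e : V ≃ₗ[K] V, f ∘ₗ e ∘ₗ f = f := by
  obtain ⟨W, hW⟩ := Submodule.exists_isCompl (ker f)
  obtain ⟨C, hC⟩ := Submodule.exists_isCompl (range f)
  obtain ⟨eKC⟩ : Nonempty (ker f ≃ₗ[K] C) := nonempty_linearEquiv_of_rank_eq <| by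
    rw [hrank, (quotientEquivOfIsCompl _ _ hC).rank_eq]
  let eWR : W ≃ₗ[K] range f := (quotientEquivOfIsCompl _ _ hW).symm ≪≫ₗ f.quotKerEquivRange
  have heWR (w : W) : (eWR w : V) = f w := by
    simp [eWR, quotientEquivOfIsCompl_symm_apply]
  let v : V ≃ₗ[K] V := (prodEquivOfIsCompl _ _ hW.symm).symm ≪≫ₗ eWR.prodCongr eKC ≪≫ₗ
    prodEquivOfIsCompl _ _ hC
  refine ⟨v.symm, comp_symm_comp_eq_of_eqOn_isCompl_ker hW.symm fun w hw => ?_⟩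
  simp [v, prodEquivOfIsCompl_symm_apply_left _ _ hW.symm ⟨w, hw⟩, heWR]

end DivisionRing

theorem stmt9 {K V : Type*} [Field K] [AddCommGroup V] [Module K V]
    (f : Module.End K V) :
    IsUnitRegular f ↔
      Module.rank K (LinearMap.ker f) = Module.rank K (V ⧸ LinearMap.range f) := by
  rw [Module.End.isUnitRegular_iff_exists_linearEquiv]
  exact ⟨fun ⟨_, he⟩ => rank_ker_eq_rank_quotient_range_of_comp_comp_eq he,
    exists_linearEquiv_comp_comp_eq_of_rank_ker_eq⟩
end

section
/- Let V be a vector space over a field. Then nullity(f) = corank(f) holds for every linear map f : V → V if and only if V is finite-dimensional. -/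
open Cardinal Function

universe u

/-- Kernel and cokernel are both complements of the range in the rank-nullity formula for `M`,
and a finite cardinal can be cancelled. -/
theorem LinearMap.rank_ker_eq_rank_quotient_range_of_rank_range_lt_aleph0 {R : Type*}
    {M : Type u} [Ring R] [HasRankNullity.{u} R] [AddCommGroup M] [Module R M] (f : M →ₗ[R] M)
    (hf : Module.rank R (LinearMap.range f) < ℵ₀) :
    Module.rank R (LinearMap.ker f) = Module.rank R (M ⧸ LinearMap.range f) := by
  have h := f.rank_range_add_rank_ker.trans
    (Submodule.rank_quotient_add_rank (LinearMap.range f)).symm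
  rwa [add_comm, add_right_inj_of_lt_aleph0 hf] at h

theorem LinearMap.rank_ker_eq_rank_quotient_range {K V : Type*} [DivisionRing K] [AddCommGroup V]
    [Module K V] [FiniteDimensional K V] (f : V →ₗ[K] V) :
    Module.rank K (LinearMap.ker f) = Module.rank K (V ⧸ LinearMap.range f) :=
  f.rank_ker_eq_rank_quotient_range_of_rank_range_lt_aleph0 (Module.rank_lt_aleph0 K _)

/-- An infinite-dimensional space is isomorphic to `K × V`, and the second projection is a
surjective endomorphism with kernel `K × 0`. -/
theorem exists_surjective_not_injective_of_not_finiteDimensional {K V : Type*} [DivisionRing K]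
    [AddCommGroup V] [Module K V] (hV : ¬ FiniteDimensional K V) :
    ∃ f : V →ₗ[K] V, Surjective f ∧ ¬ Injective f := by
  have hinf : ℵ₀ ≤ Module.rank K V := not_lt.mp (Module.rank_lt_aleph0_iff.not.mpr hV)
  obtain ⟨e⟩ : Nonempty (V ≃ₗ[K] K × V) := nonempty_linearEquiv_of_lift_rank_eq <| by
    rw [rank_prod, Module.rank_self, lift_one, add_comm, lift_add, lift_one, lift_lift, add_one_eq]
    simpa using hinf
  refine ⟨LinearMap.snd K K V ∘ₗ e.toLinearMap, ?_, ?_⟩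
  · exact Prod.snd_surjective.comp e.surjective
  · intro hinj
    have h := hinj (a₁ := e.symm ((1 : K), (0 : V))) (a₂ := 0) (by simp)
    simpa using congrArg e h

theorem stmt10 {K V : Type*} [Field K] [AddCommGroup V] [Module K V] :
    (∀ f : V →ₗ[K] V,
        Module.rank K (LinearMap.ker f) = Module.rank K (V ⧸ LinearMap.range f)) ↔
      FiniteDimensional K V := by
  refine ⟨fun h => ?_, fun _ => LinearMap.rank_ker_eq_rank_quotient_range⟩
  by_contra hV
  obtain ⟨f, hsurj, hinj⟩ := exists_surjective_not_injective_of_not_finiteDimensional hV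
  have hcoker : Module.rank K (V ⧸ LinearMap.range f) = 0 := by
    rw [LinearMap.range_eq_top.mpr hsurj]
    exact rank_subsingleton' K _
  rw [← h f, Submodule.rank_eq_zero, LinearMap.ker_eq_bot] at hcoker
  exact hinj hcoker
end

section
/- Let V be a vector space over a field. The monoid L(V) of all linear maps V → V under composition is unit-regular if and only if V is finite-dimensional. -/
theorem IsDedekindFiniteMonoid.of_forall_isUnitRegular {M : Type*} [Monoid M]
    (h : ∀ s : M, IsUnitRegular s) : IsDedekindFiniteMonoid M where
  mul_eq_one_symm {a b} hab := by
    obtain ⟨u, hu⟩ := h a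
    have hau : a * u = 1 := by rw [← mul_one (a * u), ← hab, ← mul_assoc, hu, hab]
    obtain rfl := Units.mul_eq_one_iff_eq_inv.1 hau
    rw [← Units.inv_mul_eq_one.1 hab, Units.mul_inv]

section

variable {K V : Type*} [Field K] [AddCommGroup V] [Module K V]

theorem Module.End.finiteDimensional_of_isDedekindFiniteMonoid
    [IsDedekindFiniteMonoid (Module.End K V)] : FiniteDimensional K V := by
  by_contra hinf
  have hV : Cardinal.aleph0 ≤ Module.rank K V := by
    rwa [← not_lt, Module.rank_lt_aleph0_iff]
  obtain ⟨e⟩ : Nonempty ((V × V) ≃ₗ[K] V) := nonempty_linearEquiv_of_rank_eq <| by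
    rw [rank_prod', Cardinal.add_eq_self hV]
  have : Nontrivial V := not_subsingleton_iff_nontrivial.mp fun _ => hinf inferInstance
  obtain ⟨v, hv⟩ := exists_ne (0 : V)
  have hgf : (LinearMap.fst K V V ∘ₗ e.symm.toLinearMap) *
      (e.toLinearMap ∘ₗ LinearMap.inl K V V) = 1 := by
    ext x
    simp
  have hfg := congr($(mul_eq_one_symm hgf) (e (0, v)))
  simp only [Module.End.mul_apply, LinearMap.comp_apply, LinearEquiv.coe_coe,
    LinearEquiv.symm_apply_apply, LinearMap.fst_apply, LinearMap.inl_apply,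
    Module.End.one_apply, EmbeddingLike.apply_eq_iff_eq, Prod.mk.injEq] at hfg
  exact hv hfg.2.symm

theorem LinearEquiv.exists_extend_of_finiteDimensional [FiniteDimensional K V]
    {C C' : Submodule K V} (e : C ≃ₗ[K] C') : ∃ v : V ≃ₗ[K] V, ∀ x : C, v x = e x := by
  obtain ⟨D, hD⟩ := C.exists_isCompl
  obtain ⟨D', hD'⟩ := C'.exists_isCompl
  have hdim : Module.finrank K D = Module.finrank K D' := by
    have := e.finrank_eq
    have := Submodule.finrank_add_eq_of_isCompl hD
    have := Submodule.finrank_add_eq_of_isCompl hD'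
    omega
  refine ⟨(C.prodEquivOfIsCompl D hD).symm ≪≫ₗ (e.prodCongr (.ofFinrankEq D D' hdim)) ≪≫ₗ
    C'.prodEquivOfIsCompl D' hD', fun x => ?_⟩
  simp

theorem Module.End.isUnitRegular_of_finiteDimensional [FiniteDimensional K V]
    (f : Module.End K V) : IsUnitRegular f := by
  obtain ⟨C, hC⟩ := (LinearMap.ker f).exists_isCompl
  obtain ⟨v, hv⟩ := LinearEquiv.exists_extend_of_finiteDimensional
    ((Submodule.quotientEquivOfIsCompl _ C hC).symm ≪≫ₗ f.quotKerEquivRange)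
  refine ⟨LinearMap.GeneralLinearGroup.ofLinearEquiv v.symm, ?_⟩
  refine LinearMap.ext_on_codisjoint hC.codisjoint (fun x hx => ?_) (fun x hx => ?_)
  · simp [LinearMap.mem_ker.1 hx]
  · have hvx := hv ⟨x, hx⟩
    simp only [LinearEquiv.trans_apply, Submodule.quotientEquivOfIsCompl_symm_apply,
      LinearMap.quotKerEquivRange_apply_mk] at hvx
    simp [← hvx]

end

theorem stmt11 {K V : Type*} [Field K] [AddCommGroup V] [Module K V] :
    (∀ f : Module.End K V, IsUnitRegular f) ↔ FiniteDimensional K V := by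
  constructor
  · intro h
    have := IsDedekindFiniteMonoid.of_forall_isUnitRegular h
    exact Module.End.finiteDimensional_of_isDedekindFiniteMonoid
  · intro _ f
    exact f.isUnitRegular_of_finiteDimensional
end

section
/- Let V be a vector space over a field and W a subspace of V. Then f(W) = W ∩ R(f) holds for every f ∈ L̄(V,W) if and only if W is trivial, i.e. W = {0} or W = V. -/
theorem stmt12 {K V : Type*} [Field K] [AddCommGroup V] [Module K V]
    (W : Submodule K V) :
    (∀ f : V →ₗ[K] V, (∀ w ∈ W, f w ∈ W) → f '' ↑W = (↑W : Set V) ∩ Set.range f) ↔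
      (W = ⊥ ∨ W = ⊤) := by
  constructor
  · intro h
    by_contra hc
    push_neg at hc
    obtain ⟨hb, ht⟩ := hc
    obtain ⟨w, hwW, hw0⟩ := Submodule.exists_mem_ne_zero_of_ne_bot hb
    obtain ⟨v, hv⟩ : ∃ v, v ∉ W := by
      by_contra hv; push_neg at hv; exact ht (Submodule.eq_top_iff'.2 hv)
    obtain ⟨φ, hφv, hφW⟩ := W.exists_dual_map_eq_bot_of_notMem hv inferInstance
    have hφW' : ∀ x ∈ W, φ x = 0 := by
      intro x hx
      have : φ x ∈ W.map φ := Submodule.mem_map_of_mem hx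
      rwa [hφW, Submodule.mem_bot] at this
    set f : V →ₗ[K] V := φ.smulRight w with hf
    have hfW : ∀ x ∈ W, f x ∈ W := by
      intro x hx
      simp [hf, hφW' x hx]
    have := h f hfW
    have hwmem : w ∈ (↑W : Set V) ∩ Set.range f := by
      refine ⟨hwW, (φ v)⁻¹ • v, ?_⟩
      simp [hf, smul_smul, inv_mul_cancel₀ hφv]
    rw [← this] at hwmem
    obtain ⟨x, hxW, hx⟩ := hwmem
    simp only [hf, LinearMap.coe_smulRight, hφW' x hxW, zero_smul] at hx
    exact hw0 hx.symm
  · rintro (rfl | rfl) f hf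
    · ext x
      simp only [Submodule.bot_coe, Set.image_singleton, map_zero, Set.mem_singleton_iff,
        Set.mem_inter_iff, Set.mem_range]
      constructor
      · rintro rfl; exact ⟨rfl, 0, map_zero f⟩
      · rintro ⟨rfl, _⟩; rfl
    · ext x
      simp [Set.image_univ]
end

section
/- Let X be a nonempty set. The following are equivalent: (i) the full transformation monoid T(X) is unit-regular; (ii) every element of T(X) is semi-balanced; (iii) X is finite. -/
/-- `f` is semi-balanced if its collapse `c(f) = |X \ T|` (for a transversal `T` of `ker f`)
equals its defect `d(f) = |X \ f(X)|`. -/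
def SemiBalanced {X : Type*} (f : X → X) : Prop :=
  ∃ T : Set X, IsTransversal f T ∧ Cardinal.mk ↥(Tᶜ) = Cardinal.mk ↥((Set.range f)ᶜ)

section Aux

variable {X : Type*} [Nonempty X] (f : X → X)

/-- canonical transversal via choice -/
noncomputable def Tset : Set X := Set.range (fun x => Function.invFun f (f x))

lemma f_invFun (x : X) : f (Function.invFun f (f x)) = f x :=
  Function.invFun_eq ⟨x, rfl⟩

lemma Tset_transversal : IsTransversal f (Tset f) := by
  intro x
  refine ⟨Function.invFun f (f x), ⟨⟨x, rfl⟩, f_invFun f x⟩, ?_⟩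
  rintro t ⟨⟨y, rfl⟩, ht⟩
  show Function.invFun f (f y) = Function.invFun f (f x)
  have : f y = f x := (f_invFun f y).symm.trans ht
  rw [this]

/-- the transversal is in bijection with the range -/
noncomputable def tsetEquivRange : ↥(Tset f) ≃ ↥(Set.range f) where
  toFun t := ⟨f t, Set.mem_range_self _⟩
  invFun y := ⟨Function.invFun f y, by
    obtain ⟨x, hx⟩ := y.2
    exact ⟨x, by show Function.invFun f (f x) = _; rw [hx]⟩⟩
  left_inv := by
    rintro ⟨t, y, rfl⟩
    ext
    show Function.invFun f (f (Function.invFun f (f y))) = Function.invFun f (f y)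
    rw [f_invFun f y]
  right_inv := by
    rintro ⟨y, x, rfl⟩
    ext
    exact f_invFun f x

lemma semiBalanced_of_finite [Finite X] : SemiBalanced f := by
  refine ⟨Tset f, Tset_transversal f, ?_⟩
  have h1 : Cardinal.mk ↥((Tset f)ᶜ) + Cardinal.mk ↥(Tset f) = Cardinal.mk X := by
    rw [add_comm]; exact Cardinal.mk_sum_compl _
  have h2 : Cardinal.mk ↥((Set.range f)ᶜ) + Cardinal.mk ↥(Set.range f) = Cardinal.mk X := by
    rw [add_comm]; exact Cardinal.mk_sum_compl _
  have h3 : Cardinal.mk ↥(Tset f) = Cardinal.mk ↥(Set.range f) :=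
    Cardinal.mk_congr (tsetEquivRange f)
  rw [h3] at h1
  exact Cardinal.eq_of_add_eq_add_right (h1.trans h2.symm) (Cardinal.lt_aleph0_of_finite _)

lemma unitRegular_of_finite [Finite X] (f : Function.End X) : IsUnitRegular f := by
  classical
  obtain ⟨T, _hT, hcard⟩ := semiBalanced_of_finite f
  -- we redo it with the canonical transversal
  have hcard' : Cardinal.mk ↥((Set.range f)ᶜ) = Cardinal.mk ↥((Tset f)ᶜ) := by
    have h3 : Cardinal.mk ↥(Tset f) = Cardinal.mk ↥(Set.range f) :=
      Cardinal.mk_congr (tsetEquivRange f)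
    have h1 : Cardinal.mk ↥((Tset f)ᶜ) + Cardinal.mk ↥(Set.range f) = Cardinal.mk X := by
      rw [← h3, add_comm]; exact Cardinal.mk_sum_compl _
    have h2 : Cardinal.mk ↥((Set.range f)ᶜ) + Cardinal.mk ↥(Set.range f) = Cardinal.mk X := by
      rw [add_comm]; exact Cardinal.mk_sum_compl _
    exact (Cardinal.eq_of_add_eq_add_right (h1.trans h2.symm) (Cardinal.lt_aleph0_of_finite _)).symm
  obtain ⟨e₂⟩ := Cardinal.eq.mp hcard'
  let e₁ : ↥(Set.range f) ≃ ↥(Tset f) := (tsetEquivRange f).symm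
  let u : X ≃ X :=
    (Equiv.Set.sumCompl (Set.range f)).symm.trans
      ((Equiv.sumCongr e₁ e₂).trans (Equiv.Set.sumCompl (Tset f)))
  refine ⟨⟨⇑u, ⇑u.symm, funext fun x => u.apply_symm_apply x,
    funext fun x => u.symm_apply_apply x⟩, ?_⟩
  funext x
  show f (u (f x)) = f x
  have hmem : f x ∈ Set.range f := Set.mem_range_self x
  have hu : u (f x) = (e₁ ⟨f x, hmem⟩ : X) := by
    simp only [u, Equiv.trans_apply]
    rw [Equiv.Set.sumCompl_symm_apply_of_mem hmem]
    rfl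
  rw [hu]
  show f ((tsetEquivRange f).symm ⟨f x, hmem⟩ : X) = f x
  have := congrArg Subtype.val ((tsetEquivRange f).apply_symm_apply ⟨f x, hmem⟩)
  exact this

set_option linter.unusedSectionVars false in
lemma exists_inj_not_surj [Infinite X] :
    ∃ g : X → X, Function.Injective g ∧ ¬ Function.Surjective g := by
  classical
  let e : ℕ ↪ X := Infinite.natEmbedding X
  let E : ℕ ≃ Set.range e := Equiv.ofInjective e e.injective
  refine ⟨fun x => if h : x ∈ Set.range e then e (E.symm ⟨x, h⟩ + 1) else x, ?_, ?_⟩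
  · intro a b hab
    by_cases ha : a ∈ Set.range e <;> by_cases hb : b ∈ Set.range e <;>
      simp only [ha, hb, dif_pos, dif_neg, not_false_iff] at hab
    · have hn := e.injective hab
      have h2 : E.symm ⟨a, ha⟩ = E.symm ⟨b, hb⟩ := by omega
      have h3 := congrArg E h2
      rw [E.apply_symm_apply, E.apply_symm_apply] at h3
      exact congrArg Subtype.val h3
    · exact absurd (hab ▸ Set.mem_range_self _ : b ∈ Set.range ⇑e) hb
    · exact absurd (hab ▸ Set.mem_range_self _ : a ∈ Set.range ⇑e) ha
    · exact hab
  · intro hsurj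
    obtain ⟨x, hx⟩ := hsurj (e 0)
    by_cases h : x ∈ Set.range e
    · simp only [h, dif_pos] at hx
      have := e.injective hx
      omega
    · simp only [h, dif_neg, not_false_iff] at hx
      exact h (hx ▸ Set.mem_range_self 0)

end Aux

theorem stmt14 {X : Type*} [Nonempty X] :
    List.TFAE [∀ f : Function.End X, IsUnitRegular f,
               ∀ f : X → X, SemiBalanced f,
               Finite X] := by
  tfae_have 3 → 1 := fun h f => unitRegular_of_finite f
  tfae_have 3 → 2 := fun h f => semiBalanced_of_finite f
  tfae_have 1 → 3 := by
    intro h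
    by_contra hinf
    have : Infinite X := not_finite_iff_infinite.mp hinf
    obtain ⟨g, hginj, hgns⟩ := exists_inj_not_surj (X := X)
    obtain ⟨u, hu⟩ := h g
    have hux : ∀ x, (u : Function.End X) (g x) = x := fun x => hginj (congrFun hu x)
    set v : Function.End X := ((u⁻¹ : (Function.End X)ˣ) : Function.End X) with hv_def
    have hv : ∀ x, v ((u : Function.End X) x) = x := fun x => congrFun u.inv_mul x
    have hv2 : ∀ x, (u : Function.End X) (v x) = x := fun x => congrFun u.mul_inv x
    have hg : ∀ x, g x = v x := fun x =>
      (hv (g x)).symm.trans (congrArg v (hux x))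
    exact hgns fun y => ⟨(u : Function.End X) y, (hg _).trans (hv _)⟩
  tfae_have 2 → 3 := by
    intro h
    by_contra hinf
    have : Infinite X := not_finite_iff_infinite.mp hinf
    obtain ⟨g, hginj, hgns⟩ := exists_inj_not_surj (X := X)
    obtain ⟨T, hT, hcard⟩ := h g
    have hTuniv : T = Set.univ := by
      ext x
      simp only [Set.mem_univ, iff_true]
      obtain ⟨t, ⟨htT, hft⟩, _⟩ := hT x
      rwa [hginj hft] at htT
    rw [hTuniv, Set.compl_univ] at hcard
    have h0 : Cardinal.mk ↥((Set.range g)ᶜ) = 0 := by rw [← hcard]; simp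
    rw [Cardinal.mk_eq_zero_iff] at h0
    obtain ⟨y, hy⟩ := Set.nonempty_compl.mpr
      (fun hr => hgns (Set.range_eq_univ.mp hr))
    exact h0.elim ⟨y, hy⟩
  tfae_finish
end

section
/- Let X be a nonempty set and let M be a submonoid of T(X) (containing the identity map on X). If f ∈ M is unit-regular in M, then f is semi-balanced. -/
/-! If `f ∘ e ∘ f = f` for a permutation `e`, then `e` maps `f(X)` onto a transversal `T` of
`ker f`, because `f (e (f x)) = f x`; and `e` maps `X \ f(X)` bijectively onto `X \ T`, so the
collapse and the defect of `f` agree. -/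

theorem isTransversal_image_range_s15 {X : Type*} {f g : X → X} (h : ∀ x, f (g (f x)) = f x) :
    IsTransversal f (g '' Set.range f) := by
  intro x
  refine ⟨g (f x), ⟨Set.mem_image_of_mem g (Set.mem_range_self x), h x⟩, ?_⟩
  rintro _ ⟨⟨_, ⟨a, rfl⟩, rfl⟩, hax⟩
  rw [h a] at hax
  rw [hax]

theorem semiBalanced_of_comp_perm_comp {X : Type*} {f : X → X} (e : Equiv.Perm X)
    (h : ∀ x, f (e (f x)) = f x) : SemiBalanced f := by
  refine ⟨e '' Set.range f, isTransversal_image_range_s15 h, ?_⟩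
  rw [← e.image_compl, Cardinal.mk_image_eq e.injective]

theorem stmt15_general {X : Type*} (M : Submonoid (Function.End X))
    (f : Function.End X) (hf : f ∈ M)
    (h : IsUnitRegular (⟨f, hf⟩ : M)) :
    SemiBalanced (f : X → X) := by
  obtain ⟨u, hu⟩ := h
  exact semiBalanced_of_comp_perm_comp (Equiv.Perm.equivUnitsEnd.symm (Units.map M.subtype u))
    fun x => congrFun (congrArg Subtype.val hu) x

theorem stmt15 {X : Type*} [Nonempty X] (M : Submonoid (Function.End X))
    (f : Function.End X) (hf : f ∈ M)
    (h : IsUnitRegular (⟨f, hf⟩ : M)) :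
    SemiBalanced (f : X → X) :=
  stmt15_general M f hf h
end

section
/- Let X be a nonempty set and let M be a submonoid of T(X) (containing the identity map on X). If M is unit-regular, then every element of M is semi-balanced. -/
theorem stmt16 {X : Type*} [Nonempty X] (M : Submonoid (Function.End X))
    (h : ∀ g : M, IsUnitRegular g) :
    ∀ f ∈ M, SemiBalanced (f : X → X) := by
  intro f hf
  obtain ⟨u, hu⟩ := h ⟨f, hf⟩
  set g : Function.End X := ((u : M) : Function.End X) with hg
  set v : Function.End X := (((u⁻¹ : Mˣ) : M) : Function.End X) with hv
  have hgv : g * v = 1 := by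
    rw [hg, hv, ← Submonoid.coe_mul, ← Units.val_mul, mul_inv_cancel]; rfl
  have hvg : v * g = 1 := by
    rw [hg, hv, ← Submonoid.coe_mul, ← Units.val_mul, inv_mul_cancel]; rfl
  have hli : Function.LeftInverse v g := fun x => congrFun hvg x
  have hri : Function.RightInverse v g := fun x => congrFun hgv x
  have hbij : Function.Bijective g := ⟨hli.injective, hri.surjective⟩
  -- key equation : ∀ x, f (g (f x)) = f x
  have key : ∀ x, f (g (f x)) = f x := by
    intro x
    have := congrArg (Subtype.val) hu
    exact congrFun this x
  refine ⟨g '' Set.range f, ?_, ?_⟩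
  · intro x
    refine ⟨g (f x), ⟨⟨f x, ⟨x, rfl⟩, rfl⟩, key x⟩, ?_⟩
    rintro t ⟨⟨-, ⟨y, rfl⟩, rfl⟩, ht⟩
    have : f y = f x := by rw [← key y]; exact ht
    rw [this]
  · have himg : (g '' Set.range f)ᶜ = g '' (Set.range f)ᶜ := by
      rw [Set.image_compl_eq hbij]
    rw [himg]
    exact (Cardinal.mk_congr (Equiv.Set.image g _ hbij.injective)).symm
end

section
/- Let V be a vector space over a field. Every linear map f : V → V is semi-balanced (as a function on the underlying set of V) if and only if V is finite-dimensional. -/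
/-!
A complement `W` of `ker f` is a transversal of `ker f`. In finite dimension `W` and `range f`
have the same dimension, so a linear automorphism carries `W` onto `range f`, hence `Wᶜ` onto
`(range f)ᶜ`. In infinite dimension `V × V ≃ V`, which yields an injective endomorphism that is
not surjective; an injective map has `V` as its only transversal, so its collapse is `0` while its
defect is not.
-/

open Module Submodule LinearMap

theorem IsTransversal.eq_univ_of_injective {X : Type*} {f : X → X} {T : Set X}
    (hT : IsTransversal f T) (hf : Function.Injective f) : T = Set.univ :=
  Set.eq_univ_of_forall fun x ↦ by
    obtain ⟨t, ⟨htT, hft⟩, -⟩ := hT x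
    rwa [← hf hft]

theorem SemiBalanced.surjective_of_injective {X : Type*} {f : X → X} (hbal : SemiBalanced f)
    (hf : Function.Injective f) : Function.Surjective f := by
  obtain ⟨T, hT, hcard⟩ := hbal
  rw [hT.eq_univ_of_injective hf, Set.compl_univ, Cardinal.mk_eq_zero, eq_comm,
    Cardinal.mk_set_eq_zero_iff, Set.compl_empty_iff] at hcard
  exact Set.range_eq_univ.1 hcard

theorem isTransversal_of_isCompl_ker {R M : Type*} [Ring R] [AddCommGroup M] [Module R M]
    (f : M →ₗ[R] M) {W : Submodule R M} (hW : IsCompl (ker f) W) : IsTransversal f W := by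
  intro x
  obtain ⟨y, hy, z, hz, rfl⟩ := mem_sup.1 (hW.sup_eq_top ▸ mem_top : x ∈ ker f ⊔ W)
  refine ⟨z, ⟨hz, by rw [map_add, mem_ker.1 hy, zero_add]⟩, fun t ⟨htW, hft⟩ ↦ ?_⟩
  refine injOn_of_disjoint_ker le_rfl hW.disjoint.symm htW hz ?_
  rw [hft, map_add, mem_ker.1 hy, zero_add]

theorem Submodule.exists_linearEquiv_map_eq_of_finrank_eq {K V : Type*} [DivisionRing K]
    [AddCommGroup V] [Module K V] [FiniteDimensional K V] {p q : Submodule K V}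
    (h : finrank K p = finrank K q) : ∃ e : V ≃ₗ[K] V, p.map (e : V →ₗ[K] V) = q := by
  obtain ⟨p', hp⟩ := p.exists_isCompl
  obtain ⟨q', hq⟩ := q.exists_isCompl
  have h' : finrank K p' = finrank K q' := by
    have := finrank_add_eq_of_isCompl hp
    have := finrank_add_eq_of_isCompl hq
    omega
  let e₁ := LinearEquiv.ofFinrankEq p q h
  let e : V ≃ₗ[K] V := (prodEquivOfIsCompl p p' hp).symm ≪≫ₗ
    (e₁.prodCongr (LinearEquiv.ofFinrankEq p' q' h')) ≪≫ₗ prodEquivOfIsCompl q q' hq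
  have he : (e : V →ₗ[K] V) ∘ₗ p.subtype = q.subtype ∘ₗ (e₁ : p →ₗ[K] q) := by
    ext x
    simp [e]
  refine ⟨e, ?_⟩
  rw [← p.range_subtype, ← range_comp, he, range_comp, LinearEquiv.range, map_top, range_subtype]

theorem semiBalanced_of_finiteDimensional {K V : Type*} [DivisionRing K] [AddCommGroup V]
    [Module K V] [FiniteDimensional K V] (f : V →ₗ[K] V) : SemiBalanced (f : V → V) := by
  obtain ⟨W, hW⟩ := (ker f).exists_isCompl
  have hrank : finrank K W = finrank K (range f) := by
    have := finrank_add_eq_of_isCompl hW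
    have := finrank_range_add_finrank_ker f
    omega
  obtain ⟨e, he⟩ := exists_linearEquiv_map_eq_of_finrank_eq hrank
  refine ⟨W, isTransversal_of_isCompl_ker f hW, ?_⟩
  rw [← coe_range, ← he, map_coe, LinearEquiv.coe_coe, ← Set.image_compl_eq e.bijective,
    Cardinal.mk_image_eq e.injective]

theorem exists_injective_not_surjective_of_not_finiteDimensional {K V : Type*} [DivisionRing K]
    [AddCommGroup V] [Module K V] (h : ¬FiniteDimensional K V) :
    ∃ f : V →ₗ[K] V, Function.Injective f ∧ ¬Function.Surjective f := by
  have hrank : Cardinal.aleph0 ≤ Module.rank K V := not_lt.1 (mt rank_lt_aleph0_iff.1 h)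
  obtain ⟨e⟩ : Nonempty ((V × V) ≃ₗ[K] V) :=
    nonempty_linearEquiv_of_rank_eq (by rw [rank_prod', Cardinal.add_eq_self hrank])
  have : Nontrivial V := not_subsingleton_iff_nontrivial.1 fun _ ↦ h inferInstance
  obtain ⟨v, hv⟩ := exists_ne (0 : V)
  refine ⟨e ∘ₗ inl K V V, e.injective.comp inl_injective, fun hsurj ↦ hv ?_⟩
  obtain ⟨u, hu⟩ := hsurj (e (0, v))
  exact (Prod.ext_iff.1 (e.injective hu)).2.symm

theorem stmt18 {K V : Type*} [Field K] [AddCommGroup V] [Module K V] :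
    (∀ f : V →ₗ[K] V, SemiBalanced (f : V → V)) ↔ FiniteDimensional K V := by
  refine ⟨fun h ↦ ?_, fun _ f ↦ semiBalanced_of_finiteDimensional f⟩
  by_contra hfin
  obtain ⟨f, hinj, hsurj⟩ := exists_injective_not_surjective_of_not_finiteDimensional hfin
  exact hsurj ((h f).surjective_of_injective hinj)
end
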